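/- For all trajectories u, v, t on 𝕂, every c > 0 and every r ∈ [1,∞): writing D_{ut} = D_u ∪ D_t and D_{uv} = D_u ∪ D_v, one has ((Σ_{k ∈ D_{ut}} e_{u,v}(k)^r) / |D_{ut}|)^{1/r} ≤ ((Σ_{k ∈ D_{uv}} e_{u,v}(k)^r) / |D_{uv}|)^{1/r}, where an average over an empty index set is interpreted as 0. -/

import Mathlib

/-!
Outside `D_u ∪ D_v` the cost vanishes, and on `D_v \ D_u` it takes its maximal value `c`.
So passing from `D_u ∪ D_t` to `D_u ∪ D_v` discards only zero terms and adds only maximal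
ones, neither of which can lower an average of terms lying in `[0, c ^ r]`.
-/

open scoped BigOperators

/-- A trajectory on the time window `{1,…,K}` (modeled as `Fin K`): a domain together
with a state map (values outside the domain are irrelevant). -/
structure Traj (K : ℕ) (X : Type*) where
  dom : Finset (Fin K)
  toFun : Fin K → X

/-- Per-time cost `e_{u,v}(k)` with base metric cut off at `c`. -/
noncomputable def ecost {K : ℕ} {X : Type*} [MetricSpace X] (c : ℝ) (u v : Traj K X)
    (k : Fin K) : ℝ :=
  if k ∈ u.dom ∩ v.dom then min (dist (u.toFun k) (v.toFun k)) c
  else if k ∈ u.dom ∪ v.dom then c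
  else 0

open Finset

theorem div_le_add_mul_div_add {S M p q n : ℝ} (hS : 0 ≤ S) (hM : 0 ≤ M) (hp : 0 ≤ p)
    (hq : 0 ≤ q) (hSM : S ≤ p * M) (hpn : p ≤ n) : S / n ≤ (S + q * M) / (p + q) := by
  rcases hp.eq_or_lt with rfl | hp
  · obtain rfl : S = 0 := by linarith
    simp only [zero_div, zero_add]
    positivity
  · rw [div_le_div_iff₀ (hp.trans_le hpn) (by positivity)]
    nlinarith [mul_le_mul_of_nonneg_right hpn hS, mul_nonneg hq (sub_nonneg.2 hpn),
      mul_nonneg (mul_nonneg hq (sub_nonneg.2 hpn)) hM]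

theorem sum_div_card_le_sum_div_card {ι : Type*} [DecidableEq ι] {s t : Finset ι}
    {f : ι → ℝ} {M : ℝ} (hM : 0 ≤ M) (hzero : ∀ i ∈ s \ t, f i = 0)
    (hnonneg : ∀ i ∈ s ∩ t, 0 ≤ f i) (hle : ∀ i ∈ s ∩ t, f i ≤ M) (htop : ∀ i ∈ t \ s, f i = M) :
    (∑ i ∈ s, f i) / #s ≤ (∑ i ∈ t, f i) / #t := by
  have hsum_s : ∑ i ∈ s, f i = ∑ i ∈ s ∩ t, f i :=
    (sum_subset inter_subset_left fun i hs hst ↦ hzero i (by simp_all)).symm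
  have hsum_t : ∑ i ∈ t, f i = ∑ i ∈ s ∩ t, f i + #(t \ s) * M := by
    rw [← sum_inter_add_sum_sdiff t s, inter_comm, sum_congr rfl htop, sum_const, nsmul_eq_mul]
  have hcard_t : (#t : ℝ) = #(s ∩ t) + #(t \ s) := by
    rw [← card_inter_add_card_sdiff t s, inter_comm]; push_cast; ring
  rw [hsum_s, hsum_t, hcard_t]
  refine div_le_add_mul_div_add (sum_nonneg hnonneg) hM (by positivity) (by positivity) ?_
    (by exact_mod_cast card_le_card inter_subset_left)
  simpa using sum_le_sum hle

section Ecost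

variable {K : ℕ} {X : Type*} [MetricSpace X] {c : ℝ} {u v : Traj K X} {k : Fin K}

theorem ecost_nonneg (hc : 0 ≤ c) : 0 ≤ ecost c u v k := by
  unfold ecost
  split_ifs
  · exact le_min dist_nonneg hc
  · exact hc
  · exact le_rfl

theorem ecost_le (hc : 0 ≤ c) : ecost c u v k ≤ c := by
  unfold ecost
  split_ifs
  · exact min_le_right _ _
  · exact le_rfl
  · exact hc

theorem ecost_of_notMem (hk : k ∉ u.dom ∪ v.dom) : ecost c u v k = 0 := by
  have : k ∉ u.dom ∩ v.dom := fun h ↦ hk (mem_union_left _ (mem_of_mem_inter_left h))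
  simp only [ecost, if_neg this, if_neg hk]

theorem ecost_of_mem_sdiff (hk : k ∈ v.dom \ u.dom) : ecost c u v k = c := by
  obtain ⟨hv, hu⟩ := mem_sdiff.1 hk
  have : k ∉ u.dom ∩ v.dom := fun h ↦ hu (mem_of_mem_inter_left h)
  simp only [ecost, if_neg this, if_pos (mem_union_right _ hv)]

end Ecost

theorem ospa_trajectory_average_bound_general {K : ℕ} {X : Type*} [MetricSpace X]
    {c r : ℝ} (hc : 0 < c) (hr : 1 ≤ r) (u v t : Traj K X) :
    ((∑ k ∈ u.dom ∪ t.dom, ecost c u v k ^ r) / ((u.dom ∪ t.dom).card : ℝ)) ^ (1 / r)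
      ≤ ((∑ k ∈ u.dom ∪ v.dom, ecost c u v k ^ r) / ((u.dom ∪ v.dom).card : ℝ)) ^ (1 / r) := by
  have hr0 : 0 < r := one_pos.trans_le hr
  have hcost_rpow_nonneg (k : Fin K) : 0 ≤ ecost c u v k ^ r :=
    Real.rpow_nonneg (ecost_nonneg hc.le) r
  have hmean : (∑ k ∈ u.dom ∪ t.dom, ecost c u v k ^ r) / #(u.dom ∪ t.dom)
      ≤ (∑ k ∈ u.dom ∪ v.dom, ecost c u v k ^ r) / #(u.dom ∪ v.dom) := by
    refine sum_div_card_le_sum_div_card (Real.rpow_nonneg hc.le r) (fun k hk ↦ ?_)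
      (fun k _ ↦ hcost_rpow_nonneg k)
      (fun k _ ↦ Real.rpow_le_rpow (ecost_nonneg hc.le) (ecost_le hc.le) hr0.le) (fun k hk ↦ ?_)
    · rw [ecost_of_notMem (mem_sdiff.1 hk).2, Real.zero_rpow hr0.ne']
    · have hvu : k ∈ v.dom \ u.dom := by
        simp only [mem_sdiff, mem_union] at hk ⊢
        tauto
      rw [ecost_of_mem_sdiff hvu]
  exact Real.rpow_le_rpow (div_nonneg (sum_nonneg fun k _ ↦ hcost_rpow_nonneg k) (by positivity))
    hmean (by positivity)

/-- Lemma A1: averaging the per-time cost `e_{u,v}` over `D_u ∪ D_t` gives a value no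
larger than averaging it over `D_u ∪ D_v` (an average over an empty index set is `0`,
which is automatic here from the division-by-zero convention). -/
theorem ospa_trajectory_average_bound {K : ℕ} {X : Type*} [MetricSpace X] (hK : 1 ≤ K)
    {c r : ℝ} (hc : 0 < c) (hr : 1 ≤ r) (u v t : Traj K X) :
    ((∑ k ∈ u.dom ∪ t.dom, ecost c u v k ^ r) / ((u.dom ∪ t.dom).card : ℝ)) ^ (1 / r)
      ≤ ((∑ k ∈ u.dom ∪ v.dom, ecost c u v k ^ r) / ((u.dom ∪ v.dom).card : ℝ)) ^ (1 / r) :=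
  ospa_trajectory_average_bound_general hc hr u v t
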